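/- arXiv:1605.08432 — 2 statements merged into one kernel-verified Lean document; each statement's English description precedes it below -/
import Mathlib

section
/- For all real numbers a, b, one has √(1+b²) − √(1+a²) ≥ a(b−a)/√(1+a²) + (b−a)²/(2(1+max{a²,b²})^{3/2}). -/
/-!
Write `f t = √(1 + t²)`. Rationalising `f a * f b - a * b - 1` against `f a * f b + a * b + 1`,
whose product is `(1 + a²)(1 + b²) - (a * b + 1)² = (b - a)²`, gives the exact tangent-line
remainder `f b - f a - f' a * (b - a) = (b - a)² / (f a * (f a * f b + a * b + 1))`.
With `M = max (a²) (b²)` both `f a` and `f b` are at most `√(1 + M)` and `a * b ≤ M`, so the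
denominator is at most `2 (1 + M)^{3/2}`.
-/

open Real

lemma sqrt_one_add_sq_mul_add_mul_add_one_pos (a b : ℝ) :
    0 < √(1 + a ^ 2) * √(1 + b ^ 2) + a * b + 1 := by
  have hab : |a * b| ≤ √(1 + a ^ 2) * √(1 + b ^ 2) := by
    rw [abs_mul]
    exact mul_le_mul (abs_le_sqrt (by linarith)) (abs_le_sqrt (by linarith))
      (abs_nonneg b) (sqrt_nonneg _)
  linarith [neg_abs_le (a * b)]

lemma sqrt_one_add_sq_sub_tangent_eq (a b : ℝ) :
    √(1 + b ^ 2) - √(1 + a ^ 2) - a * (b - a) / √(1 + a ^ 2)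
      = (b - a) ^ 2 / (√(1 + a ^ 2) * (√(1 + a ^ 2) * √(1 + b ^ 2) + a * b + 1)) := by
  have hA : √(1 + a ^ 2) ^ 2 = 1 + a ^ 2 := sq_sqrt (by positivity)
  have hB : √(1 + b ^ 2) ^ 2 = 1 + b ^ 2 := sq_sqrt (by positivity)
  have hrationalise : (√(1 + a ^ 2) * √(1 + b ^ 2) - a * b - 1)
      * (√(1 + a ^ 2) * √(1 + b ^ 2) + a * b + 1) = (b - a) ^ 2 := by
    linear_combination √(1 + b ^ 2) ^ 2 * hA + (1 + a ^ 2) * hB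
  have hA_pos : 0 < √(1 + a ^ 2) := sqrt_pos.mpr (by positivity)
  have hD_pos := sqrt_one_add_sq_mul_add_mul_add_one_pos a b
  rw [eq_div_iff (by positivity), ← hrationalise]
  field_simp
  linear_combination -(√(1 + a ^ 2) * √(1 + b ^ 2) + a * b + 1) * hA

lemma sqrt_one_add_sq_mul_add_mul_add_one_le (a b : ℝ) :
    √(1 + a ^ 2) * (√(1 + a ^ 2) * √(1 + b ^ 2) + a * b + 1)
      ≤ 2 * (1 + max (a ^ 2) (b ^ 2)) ^ ((3 : ℝ) / 2) := by
  set M := max (a ^ 2) (b ^ 2)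
  have hM : 0 ≤ 1 + M := by positivity
  have hA : √(1 + a ^ 2) ≤ √(1 + M) := sqrt_le_sqrt (by simp [M])
  have hB : √(1 + b ^ 2) ≤ √(1 + M) := sqrt_le_sqrt (by simp [M])
  have hab : a * b ≤ M := by
    nlinarith [sq_nonneg (a - b), le_max_left (a ^ 2) (b ^ 2), le_max_right (a ^ 2) (b ^ 2)]
  have hAB : √(1 + a ^ 2) * √(1 + b ^ 2) ≤ 1 + M :=
    (mul_le_mul hA hB (sqrt_nonneg _) (sqrt_nonneg _)).trans_eq (mul_self_sqrt hM)
  calc √(1 + a ^ 2) * (√(1 + a ^ 2) * √(1 + b ^ 2) + a * b + 1)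
      ≤ √(1 + M) * (2 * (1 + M)) :=
        mul_le_mul hA (by linarith) (sqrt_one_add_sq_mul_add_mul_add_one_pos a b).le
          (sqrt_nonneg _)
    _ = 2 * √(1 + M) ^ 3 := by rw [pow_succ, sq_sqrt hM]; ring
    _ = 2 * (1 + M) ^ ((3 : ℝ) / 2) := by
        rw [rpow_div_two_eq_sqrt _ hM]; norm_cast

/-- For all real numbers `a, b`:
`√(1+b²) − √(1+a²) ≥ a(b−a)/√(1+a²) + (b−a)²/(2(1+max{a²,b²})^{3/2})`. -/
theorem sqrt_one_add_sq_convexity_ineq (a b : ℝ) :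
    a * (b - a) / Real.sqrt (1 + a ^ 2)
      + (b - a) ^ 2 / (2 * (1 + max (a ^ 2) (b ^ 2)) ^ ((3 : ℝ) / 2))
      ≤ Real.sqrt (1 + b ^ 2) - Real.sqrt (1 + a ^ 2) := by
  have hremainder : (b - a) ^ 2 / (2 * (1 + max (a ^ 2) (b ^ 2)) ^ ((3 : ℝ) / 2))
      ≤ √(1 + b ^ 2) - √(1 + a ^ 2) - a * (b - a) / √(1 + a ^ 2) := by
    rw [sqrt_one_add_sq_sub_tangent_eq]
    have hD_pos := sqrt_one_add_sq_mul_add_mul_add_one_pos a b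
    exact div_le_div_of_nonneg_left (sq_nonneg _) (by positivity)
      (sqrt_one_add_sq_mul_add_mul_add_one_le a b)
  linarith
end

section
/- For ω ∈ (0, 2π), the transcendental equation sin²(αω) = α² sin²(ω) has no complex roots α in the strip 0 < Re α ≤ 1/2. -/
/-!
Write `α = x + iy` and compare moduli: `‖sin (αω)‖² = sin² (xω) + sinh² (yω)`, while
`‖α² sin² ω‖ = (x² + y²) sin² ω`. The imaginary parts satisfy `sinh² (yω) ≥ (yω)² ≥ y² sin² ω`.
For the real parts, concavity of `sin` on `[0, π]` gives `sin (xω) ≥ 2x sin (ω/2)` when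
`0 < x ≤ 1/2`, and `2x sin (ω/2) > |2x sin (ω/2) cos (ω/2)| = x |sin ω|` because `sin (ω/2) > 0`.
So the left side is strictly larger.
-/

open Real

theorem Complex.sq_norm_sin (z : ℂ) :
    ‖Complex.sin z‖ ^ 2 = Real.sin z.re ^ 2 + Real.sinh z.im ^ 2 := by
  have hsin : Complex.sin z = (Real.sin z.re * Real.cosh z.im : ℝ)
      + (Real.cos z.re * Real.sinh z.im : ℝ) * Complex.I := by
    rw [Complex.sin_eq]; push_cast; ring
  rw [hsin, Complex.sq_norm, Complex.normSq_add_mul_I]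
  nlinarith [Real.sin_sq_add_cos_sq z.re, Real.cosh_sq z.im]

theorem Real.sq_le_sinh_sq (x : ℝ) : x ^ 2 ≤ sinh x ^ 2 :=
  sq_le_sq.2 <| by rw [abs_sinh]; exact self_le_sinh_iff.2 (abs_nonneg x)

theorem Real.mul_sin_le_sin_mul {t θ : ℝ} (ht₀ : 0 ≤ t) (ht₁ : t ≤ 1) (hθ₀ : 0 ≤ θ)
    (hθ : θ ≤ π) : t * sin θ ≤ sin (t * θ) := by
  have := strictConcaveOn_sin_Icc.concaveOn.2 ⟨hθ₀, hθ⟩ ⟨le_rfl, pi_pos.le⟩ ht₀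
    (sub_nonneg.2 ht₁) (add_sub_cancel t 1)
  simpa using this

theorem Real.sq_mul_sin_sq_lt_sin_mul_sq {x ω : ℝ} (hx₀ : 0 < x) (hx : x ≤ 1 / 2)
    (hω₀ : 0 < ω) (hω : ω < 2 * π) : x ^ 2 * sin ω ^ 2 < sin (x * ω) ^ 2 := by
  have hs : 0 < sin (ω / 2) := sin_pos_of_pos_of_lt_pi (by linarith) (by linarith)
  have hc : cos (ω / 2) ^ 2 < 1 := by nlinarith [sin_sq_add_cos_sq (ω / 2)]
  have hsin : sin ω = 2 * sin (ω / 2) * cos (ω / 2) := by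
    rw [← sin_two_mul, mul_div_cancel₀ ω two_ne_zero]
  have hconc : 2 * x * sin (ω / 2) ≤ sin (x * ω) := by
    have := mul_sin_le_sin_mul (t := 2 * x) (θ := ω / 2) (by linarith) (by linarith)
      (by linarith) (by linarith)
    rwa [show 2 * x * (ω / 2) = x * ω by ring] at this
  have hpos : 0 < 2 * x * sin (ω / 2) := by positivity
  calc x ^ 2 * sin ω ^ 2 = (2 * x * sin (ω / 2)) ^ 2 * cos (ω / 2) ^ 2 := by rw [hsin]; ring
    _ < (2 * x * sin (ω / 2)) ^ 2 := mul_lt_of_lt_one_right (by positivity) hc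
    _ ≤ sin (x * ω) ^ 2 := pow_le_pow_left₀ hpos.le hconc 2

theorem Real.sq_mul_sin_sq_le_sinh_mul_sq (y ω : ℝ) : y ^ 2 * sin ω ^ 2 ≤ sinh (y * ω) ^ 2 :=
  calc y ^ 2 * sin ω ^ 2 ≤ y ^ 2 * ω ^ 2 := mul_le_mul_of_nonneg_left sin_sq_le_sq (sq_nonneg y)
    _ = (y * ω) ^ 2 := (mul_pow y ω 2).symm
    _ ≤ sinh (y * ω) ^ 2 := sq_le_sinh_sq _

/-- For `ω ∈ (0, 2π)`, the transcendental equation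
`sin²(αω) = α² sin²(ω)` has no complex roots `α` in the strip `0 < Re α ≤ 1/2`. -/
theorem no_roots_in_strip (ω : ℝ) (hω : ω ∈ Set.Ioo 0 (2 * π)) (α : ℂ)
    (h1 : 0 < α.re) (h2 : α.re ≤ 1 / 2) :
    Complex.sin (α * (ω : ℂ)) ^ 2 ≠ α ^ 2 * Complex.sin (ω : ℂ) ^ 2 := by
  intro h
  have hnorm : ‖Complex.sin (α * ω)‖ ^ 2 = ‖α‖ ^ 2 * ‖Complex.sin ω‖ ^ 2 := by
    simpa [norm_pow] using congrArg norm h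
  rw [Complex.sq_norm_sin, Complex.sq_norm_sin, Complex.sq_norm, Complex.normSq_apply] at hnorm
  simp only [Complex.mul_re, Complex.mul_im, Complex.ofReal_re, Complex.ofReal_im, mul_zero,
    sub_zero, zero_add, sinh_zero] at hnorm
  have hre := sq_mul_sin_sq_lt_sin_mul_sq h1 h2 hω.1 hω.2
  have him := sq_mul_sin_sq_le_sinh_mul_sq α.im ω
  nlinarith
end
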